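/- If a connected trivalent graph is embedded in the 2-sphere so that at most three faces have fewer than 6 sides and every face has an even number of sides at least 2, then exactly three faces are 2-gons and all remaining faces are hexagons. -/
import Mathlib


/-- If a connected trivalent graph is embedded in the 2-sphere
(`3V = 2E`, `Σ n_f = 2E`, Euler formula `V - E + F = 2`) so that at most
three faces have fewer than 6 sides and every face has an even number of
sides at least 2, then exactly three faces are 2-gons and all remaining
faces are hexagons. -/
theorem three_bigons_rest_hexagons
    {ι : Type*} [DecidableEq ι] (faces : Finset ι) (n : ι → ℕ) (V E : ℕ)
    (hdeg : 3 * V = 2 * E)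
    (hedge : ∑ f ∈ faces, n f = 2 * E)
    (heuler : (V : ℤ) - (E : ℤ) + (faces.card : ℤ) = 2)
    (heven : ∀ f ∈ faces, Even (n f) ∧ 2 ≤ n f)
    (hfew : (faces.filter (fun f => n f < 6)).card ≤ 3) :
    (faces.filter (fun f => n f = 2)).card = 3 ∧
      ∀ f ∈ faces, n f ≠ 2 → n f = 6 := by
  set S := faces.filter (fun f => n f < 6) with hS
  -- key identity : ∑ (6 - n f) = 12
  have key : ∑ f ∈ faces, ((6 : ℤ) - n f) = 12 := by
    have h1 : ∑ f ∈ faces, ((6 : ℤ) - n f)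
        = 6 * (faces.card : ℤ) - ∑ f ∈ faces, (n f : ℤ) := by
      rw [Finset.sum_sub_distrib, Finset.sum_const]
      ring
    have h2 : (∑ f ∈ faces, (n f : ℤ)) = 2 * (E : ℤ) := by
      exact_mod_cast congrArg (Nat.cast : ℕ → ℤ) hedge
    have h3 : (3 : ℤ) * V = 2 * E := by exact_mod_cast hdeg
    rw [h1, h2]; linarith
  have hsplit := Finset.sum_filter_add_sum_filter_not faces (fun f => n f < 6)
    (fun f => (6 : ℤ) - n f)
  have hneg : ∑ f ∈ faces.filter (fun f => ¬ n f < 6), ((6 : ℤ) - n f) ≤ 0 := by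
    apply Finset.sum_nonpos
    intro f hf
    have := (Finset.mem_filter.mp hf).2
    push_neg at this
    have : (6 : ℤ) ≤ n f := by exact_mod_cast this
    linarith
  have hpos : ∑ f ∈ S, ((6 : ℤ) - n f) ≤ 4 * S.card := by
    calc ∑ f ∈ S, ((6 : ℤ) - n f) ≤ ∑ f ∈ S, (4 : ℤ) := by
          apply Finset.sum_le_sum
          intro f hf
          have h2 := (heven f (Finset.mem_filter.mp hf).1).2
          have : (2 : ℤ) ≤ n f := by exact_mod_cast h2
          linarith
      _ = 4 * S.card := by rw [Finset.sum_const]; ring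
  have hScard : (S.card : ℤ) ≤ 3 := by exact_mod_cast hfew
  -- 12 = ∑_S + ∑_notS ≤ 4|S| ≤ 12, so everything is tight.
  have hsumS : ∑ f ∈ S, ((6 : ℤ) - n f) = 12 := by linarith
  have hcard3 : S.card = 3 := by
    have : (12 : ℤ) ≤ 4 * S.card := by linarith
    omega
  have hsumneg : ∑ f ∈ faces.filter (fun f => ¬ n f < 6), ((6 : ℤ) - n f) = 0 := by
    linarith
  -- each face not in S is a hexagon
  have hhex : ∀ f ∈ faces, ¬ n f < 6 → n f = 6 := by
    intro f hf hnf
    have hmem : f ∈ faces.filter (fun f => ¬ n f < 6) := Finset.mem_filter.mpr ⟨hf, hnf⟩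
    have := (Finset.sum_eq_zero_iff_of_nonpos ?_).mp hsumneg f hmem
    · have : (n f : ℤ) = 6 := by linarith
      exact_mod_cast this
    · intro g hg
      have := (Finset.mem_filter.mp hg).2
      push_neg at this
      have : (6 : ℤ) ≤ n g := by exact_mod_cast this
      linarith
  -- each face in S is a 2-gon
  have hbigon : ∀ f ∈ S, n f = 2 := by
    have hz : ∑ f ∈ S, ((4 : ℤ) - (6 - n f)) = 0 := by
      rw [Finset.sum_sub_distrib, Finset.sum_const, hsumS, hcard3]
      ring
    intro f hf
    have := (Finset.sum_eq_zero_iff_of_nonneg ?_).mp hz f hf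
    · have : (n f : ℤ) = 2 := by linarith
      exact_mod_cast this
    · intro g hg
      have h2 := (heven g (Finset.mem_filter.mp hg).1).2
      have : (2 : ℤ) ≤ n g := by exact_mod_cast h2
      linarith
  have hEq : faces.filter (fun f => n f = 2) = S := by
    ext f
    simp only [Finset.mem_filter, hS]
    constructor
    · rintro ⟨hf, h2⟩; exact ⟨hf, by omega⟩
    · rintro ⟨hf, h6⟩
      exact ⟨hf, hbigon f (Finset.mem_filter.mpr ⟨hf, h6⟩)⟩
  refine ⟨by rw [hEq]; exact hcard3, ?_⟩
  intro f hf hne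
  by_cases h : n f < 6
  · exact absurd (hbigon f (Finset.mem_filter.mpr ⟨hf, h⟩)) hne
  · exact hhex f hf h
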